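/- arXiv:1703.09965 — 2 statements merged into one kernel-verified Lean document; each statement's English description precedes it below -/
import Mathlib

section
/- Let p ≥ 2 be an integer, let w₀ = (1/p, …, 1/p) ∈ ℝ^p, and let w ∈ ℝ^p be a fixed vector with wᵢ ≥ 0 for all i, Σᵢ wᵢ = 1, and w ≠ w₀. Then Q(w,r) → +∞ as r → 1 from the left (with r ranging in (0,1)); consequently, among all properly weighted group effects, the average group effect defined by w₀ is the only one whose estimator variance remains bounded as r → 1. -/
open Matrix Filter Topology

/-- The `p × p` Gram/correlation matrix of a uniform model at multicollinearity
level `r`: diagonal entries `1`, off-diagonal entries `r`. -/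
noncomputable def unifMat (p : ℕ) (r : ℝ) : Matrix (Fin p) (Fin p) ℝ :=
  fun i j => if i = j then 1 else r

/-- `Q(w,r) = wᵀ A(p,r)⁻¹ w`. -/
noncomputable def Qform (p : ℕ) (r : ℝ) (w : Fin p → ℝ) : ℝ :=
  w ⬝ᵥ (unifMat p r)⁻¹.mulVec w

/-!
Solving `A(p,r) v = w` explicitly gives, with `s = Σᵢ wᵢ`,
`Q(w,r) = Σᵢ (wᵢ - s/p)² / (1 - r) + s² / (p (1 + (p-1) r))`.
The second term is nonnegative for `0 < r < 1`, and when `s = 1` and `w ≠ w₀` the numerator of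
the first is a positive constant, so `Q(w,r) → +∞` as `r → 1⁻`.
-/

/-- Since `unifMat p r *ᵥ v = (1 - r) v + r (Σ v) 𝟙`, the solution of `unifMat p r *ᵥ v = w`
has the form `(w - c 𝟙) / (1 - r)`; comparing sums determines `c`. -/
noncomputable def unifSolve (p : ℕ) (r : ℝ) (w : Fin p → ℝ) : Fin p → ℝ :=
  fun i => (w i - r * (∑ j, w j) / (1 + (p - 1) * r)) / (1 - r)

namespace unifMat

variable {p : ℕ} {r : ℝ}

lemma mulVec_apply (v : Fin p → ℝ) (i : Fin p) :
    (unifMat p r *ᵥ v) i = (1 - r) * v i + r * ∑ j, v j := by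
  have hrow : ∀ j, unifMat p r i j = r + if i = j then 1 - r else 0 := fun j => by
    by_cases h : i = j <;> simp [unifMat, h]
  simp only [mulVec, dotProduct, hrow, add_mul, Finset.sum_add_distrib, ite_mul, zero_mul,
    Finset.sum_ite_eq, Finset.mem_univ, if_true, ← Finset.mul_sum]
  ring

lemma mulVec_unifSolve (hr : 1 - r ≠ 0) (hd : 1 + (p - 1) * r ≠ 0) (w : Fin p → ℝ) :
    unifMat p r *ᵥ unifSolve p r w = w := by
  ext i
  have hsum : ∑ j, unifSolve p r w j
      = ((∑ j, w j) - p * (r * (∑ j, w j) / (1 + (p - 1) * r))) / (1 - r) := by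
    simp [unifSolve, ← Finset.sum_div, Finset.sum_sub_distrib]
  rw [mulVec_apply, hsum, unifSolve]
  generalize hdef : 1 + (p - 1) * r = d at hd ⊢
  field_simp
  linear_combination -(r * ∑ j, w j) * hdef

lemma isUnit (hr : 1 - r ≠ 0) (hd : 1 + (p - 1) * r ≠ 0) : IsUnit (unifMat p r) :=
  mulVec_surjective_iff_isUnit.mp fun w => ⟨_, mulVec_unifSolve hr hd w⟩

lemma inv_mulVec (hr : 1 - r ≠ 0) (hd : 1 + (p - 1) * r ≠ 0) (w : Fin p → ℝ) :
    (unifMat p r)⁻¹ *ᵥ w = unifSolve p r w :=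
  have := (isUnit hr hd).invertible
  inv_mulVec_eq_vec (mulVec_unifSolve hr hd w).symm

end unifMat

lemma sum_sq_sub_mean_sq {ι : Type*} [Fintype ι] [Nonempty ι] (w : ι → ℝ) :
    ∑ i, (w i - (∑ j, w j) / Fintype.card ι) ^ 2
      = ∑ i, w i ^ 2 - (∑ j, w j) ^ 2 / Fintype.card ι := by
  have hn : (Fintype.card ι : ℝ) ≠ 0 := by positivity
  simp only [sub_sq, Finset.sum_add_distrib, Finset.sum_sub_distrib, ← Finset.sum_mul,
    ← Finset.mul_sum, Finset.sum_const, Finset.card_univ, nsmul_eq_mul]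
  field_simp
  ring

lemma Qform_eq {p : ℕ} [NeZero p] {r : ℝ} (hr : 1 - r ≠ 0) (hd : 1 + (p - 1) * r ≠ 0)
    (w : Fin p → ℝ) :
    Qform p r w = (∑ i, (w i - (∑ j, w j) / p) ^ 2) / (1 - r)
      + (∑ j, w j) ^ 2 / (p * (1 + (p - 1) * r)) := by
  have hp : (p : ℝ) ≠ 0 := NeZero.ne _
  have hmean := sum_sq_sub_mean_sq w
  rw [Fintype.card_fin] at hmean
  rw [Qform, unifMat.inv_mulVec hr hd, hmean]
  simp only [dotProduct, unifSolve, mul_div_assoc', ← Finset.sum_div, mul_sub,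
    Finset.sum_sub_distrib, ← Finset.sum_mul, sq]
  generalize hdef : 1 + (p - 1) * r = d at hd ⊢
  field_simp
  linear_combination -(∑ j, w j) ^ 2 * hdef

lemma tendsto_div_one_sub_nhdsLT_one {c : ℝ} (hc : 0 < c) :
    Tendsto (fun r : ℝ => c / (1 - r)) (𝓝[<] 1) atTop := by
  have h : Tendsto (fun r : ℝ => 1 - r) (𝓝[<] 1) (𝓝[>] 0) := by
    refine tendsto_nhdsWithin_of_tendsto_nhds_of_eventually_within _ ?_ ?_
    · simpa using (tendsto_const_nhds.sub tendsto_id : Tendsto (fun r : ℝ => 1 - r) (𝓝 1) _)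
        |>.mono_left nhdsWithin_le_nhds
    · filter_upwards [self_mem_nhdsWithin] with r hr
      exact sub_pos.mpr (Set.mem_Iio.mp hr)
  simpa only [div_eq_mul_inv, Function.comp_def] using
    (tendsto_inv_nhdsGT_zero.comp h).const_mul_atTop hc

theorem variance_diverges_off_average_general (p : ℕ) (w : Fin p → ℝ)
    (hw1 : (∑ i, w i) = 1)
    (hwne : w ≠ fun _ => 1 / (p : ℝ)) :
    Tendsto (fun r : ℝ => Qform p r w) (𝓝[Set.Ioo (0 : ℝ) 1] 1) atTop := by
  have : NeZero p := ⟨by rintro rfl; simp at hw1⟩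
  have hp : (1 : ℝ) ≤ p := by exact_mod_cast Nat.one_le_iff_ne_zero.mpr (NeZero.ne p)
  set c := ∑ i, (w i - 1 / p) ^ 2
  have hc : 0 < c := by
    obtain ⟨i, hi⟩ := Function.ne_iff.mp hwne
    exact Finset.sum_pos' (fun j _ => sq_nonneg _)
      ⟨i, Finset.mem_univ _, pow_two_pos_of_ne_zero (sub_ne_zero.mpr hi)⟩
  have hlower : ∀ r ∈ Set.Ioo (0 : ℝ) 1, c / (1 - r) ≤ Qform p r w := by
    rintro r ⟨hr0, hr1⟩
    have hd : 0 < 1 + (p - 1) * r := by nlinarith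
    rw [Qform_eq (by linarith) hd.ne', hw1]
    exact le_add_of_nonneg_right (by positivity)
  exact tendsto_atTop_mono' _ (eventually_nhdsWithin_of_forall hlower)
    ((tendsto_div_one_sub_nhdsLT_one hc).mono_left (nhdsWithin_mono _ Set.Ioo_subset_Iio_self))

/-- for any fixed nonnegative weight vector `w` summing to 1 with
`w ≠ w₀ = (1/p, …, 1/p)`, the variance `Q(w,r)` tends to `+∞` as `r → 1⁻`
(with `r` ranging in `(0,1)`); only the average group effect stays bounded. -/
theorem variance_diverges_off_average (p : ℕ) (hp : 2 ≤ p) (w : Fin p → ℝ)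
    (hw0 : ∀ i, 0 ≤ w i) (hw1 : (∑ i, w i) = 1)
    (hwne : w ≠ fun _ => 1 / (p : ℝ)) :
    Tendsto (fun r : ℝ => Qform p r w) (𝓝[Set.Ioo (0 : ℝ) 1] 1) atTop :=
  variance_diverges_off_average_general p w hw1 hwne
end

section
/- Let p ≥ 2 be an integer and s ∈ ℝ^p with sᵢ > 0 for all i, and let w_w = (s₁, …, s_p)/Σᵢ sᵢ. Let w ∈ ℝ^p be a fixed vector with Σᵢ |wᵢ| = 1, w ≠ w_w, and w ≠ −w_w. Then Q_S(w,r) → +∞ as r → 1 from the left (with r ranging in (0,1)); that is, among all normalized group effects of the general uniform model, the variability weighted group effect τ_w is (up to overall sign) the only one whose estimator variance remains bounded as r approaches 1. -/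
/-!
Writing `J` for the all-ones matrix, `A(p,r) = (1 - r) I + r J` and `J² = p J`,
so `A(p,r)⁻¹ = (1 - r)⁻¹ (I - c J)` with `c = r / (1 + (p - 1) r)`. With `v = S⁻¹ w` this
gives `Q_S(w,r) = (∑ vᵢ² - c (∑ vᵢ)²) / (1 - r)`. As `r → 1⁻` the numerator tends to
`∑ vᵢ² - (∑ vᵢ)² / p`, which is positive unless `v` is constant (strict Cauchy–Schwarz);
a constant `v` means `w` is proportional to `s`, and `∑ |wᵢ| = 1` then forces `w = ±w_w`.
-/

open Matrix Filter Topology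

/-- `Q_S(w,r) = wᵀ S⁻¹ A(p,r)⁻¹ S⁻¹ w` with `S = diag s`. -/
noncomputable def QSform (p : ℕ) (r : ℝ) (s w : Fin p → ℝ) : ℝ :=
  (fun i => w i / s i) ⬝ᵥ (unifMat p r)⁻¹.mulVec (fun i => w i / s i)

open Finset

theorem sum_sum_sub_sq {ι R : Type*} [Fintype ι] [CommRing R] (v : ι → R) :
    ∑ a, ∑ b, (v a - v b) ^ 2 = 2 * (Fintype.card ι * ∑ i, v i ^ 2 - (∑ i, v i) ^ 2) := by
  simp only [sub_sq, sum_add_distrib, sum_sub_distrib, sum_const, card_univ, nsmul_eq_mul,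
    ← mul_sum, ← sum_mul, mul_assoc]
  ring

theorem sq_sum_lt_card_mul_sum_sq {ι R : Type*} [Fintype ι] [CommRing R] [LinearOrder R]
    [IsStrictOrderedRing R] {v : ι → R} (h : ∃ i j, v i ≠ v j) :
    (∑ i, v i) ^ 2 < Fintype.card ι * ∑ i, v i ^ 2 := by
  obtain ⟨i, j, hij⟩ := h
  have hpos : 0 < ∑ a, ∑ b, (v a - v b) ^ 2 :=
    calc 0 < (v i - v j) ^ 2 := by simpa [sq_pos_iff, sub_ne_zero] using hij
      _ ≤ ∑ b, (v i - v b) ^ 2 :=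
        single_le_sum (f := fun b => (v i - v b) ^ 2) (fun _ _ => sq_nonneg _) (mem_univ j)
      _ ≤ ∑ a, ∑ b, (v a - v b) ^ 2 :=
        single_le_sum (f := fun a => ∑ b, (v a - v b) ^ 2)
          (fun _ _ => sum_nonneg fun _ _ => sq_nonneg _) (mem_univ i)
  rw [sum_sum_sub_sq] at hpos
  linarith

noncomputable def variabilityWeight {ι : Type*} [Fintype ι] (s : ι → ℝ) : ι → ℝ :=
  fun i => s i / ∑ j, s j

theorem exists_div_ne_div_of_ne_variabilityWeight {ι : Type*} [Fintype ι] {s w : ι → ℝ}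
    (hs : ∀ i, 0 < s i) (hw : ∑ i, |w i| = 1) (hne : w ≠ variabilityWeight s)
    (hne' : w ≠ -variabilityWeight s) : ∃ i j, w i / s i ≠ w j / s j := by
  by_contra! h
  rcases isEmpty_or_nonempty ι with hι | ⟨⟨i₀⟩⟩
  · exact hne (Subsingleton.elim _ _)
  set c := w i₀ / s i₀
  have hwc : ∀ i, w i = c * s i := fun i => (div_eq_iff (hs i).ne').mp (h i i₀)
  have hsum : 0 < ∑ j, s j := sum_pos (fun i _ => hs i) ⟨i₀, mem_univ _⟩
  have habs : |c| = (∑ j, s j)⁻¹ := by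
    refine eq_inv_of_mul_eq_one_left ?_
    rw [← hw, mul_sum]
    simp only [hwc, abs_mul, abs_of_pos (hs _)]
  rcases (abs_eq (inv_pos.2 hsum).le).mp habs with hc | hc
  · exact hne (funext fun i => by rw [hwc, hc, inv_mul_eq_div, variabilityWeight])
  · exact hne' (funext fun i => by rw [hwc, hc, Pi.neg_apply, variabilityWeight]; ring)

theorem ones_mul_ones {n α : Type*} [Fintype n] [Semiring α] :
    (of fun _ _ => (1 : α) : Matrix n n α) * of (fun _ _ => 1) =
      (Fintype.card n : α) • of fun _ _ => 1 := by
  ext i j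
  simp [mul_apply]

theorem unifMat_eq (p : ℕ) (r : ℝ) :
    unifMat p r = (1 - r) • 1 + r • of fun _ _ => 1 := by
  ext i j
  by_cases h : i = j <;> simp [unifMat, h, one_apply]

theorem unifMat_mul_one_sub_smul_ones {p : ℕ} {r : ℝ} (hd : 1 + (p - 1) * r ≠ 0) :
    unifMat p r * (1 - (r / (1 + (p - 1) * r)) • of fun _ _ => 1) = (1 - r) • 1 := by
  have hc : (1 - r) * (r / (1 + (p - 1) * r)) + r * (r / (1 + (p - 1) * r)) * p = r := by
    linear_combination div_mul_cancel₀ r hd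
  rw [unifMat_eq, mul_sub, add_mul, add_mul, mul_one, mul_one, mul_smul_comm, mul_smul_comm,
    smul_mul_assoc, smul_mul_assoc, one_mul, ones_mul_ones, Fintype.card_fin]
  linear_combination (norm := module)
    -hc • (of fun _ _ => (1 : ℝ) : Matrix (Fin p) (Fin p) ℝ)

theorem unifMat_inv {p : ℕ} {r : ℝ} (hr : r ≠ 1) (hd : 1 + (p - 1) * r ≠ 0) :
    (unifMat p r)⁻¹ = (1 - r)⁻¹ • (1 - (r / (1 + (p - 1) * r)) • of fun _ _ => 1) := by
  refine inv_eq_right_inv ?_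
  rw [mul_smul_comm, unifMat_mul_one_sub_smul_ones hd, smul_smul,
    inv_mul_cancel₀ (sub_ne_zero.mpr hr.symm), one_smul]

theorem dotProduct_unifMat_inv_mulVec {p : ℕ} {r : ℝ} (hr : r ≠ 1) (hd : 1 + (p - 1) * r ≠ 0)
    (x : Fin p → ℝ) :
    x ⬝ᵥ (unifMat p r)⁻¹ *ᵥ x =
      (∑ i, x i ^ 2 - r / (1 + (p - 1) * r) * (∑ i, x i) ^ 2) / (1 - r) := by
  have hJ : x ⬝ᵥ (of fun _ _ => 1) *ᵥ x = (∑ i, x i) ^ 2 := by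
    simp [dotProduct, mulVec, sq, sum_mul]
  rw [unifMat_inv hr hd, smul_mulVec, sub_mulVec, one_mulVec, smul_mulVec, dotProduct_smul,
    dotProduct_sub, dotProduct_smul, hJ, smul_eq_mul, smul_eq_mul]
  simp only [dotProduct, sq]
  ring

theorem tendsto_inv_one_sub_nhdsLT_one :
    Tendsto (fun r : ℝ => (1 - r)⁻¹) (𝓝[<] 1) atTop := by
  refine tendsto_inv_nhdsGT_zero.comp (tendsto_nhdsWithin_iff.mpr ⟨?_, ?_⟩)
  · exact ((continuous_const.sub continuous_id).tendsto' (1 : ℝ) 0 (sub_self 1)).mono_left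
      nhdsWithin_le_nhds
  · filter_upwards [self_mem_nhdsWithin] with r (hr : r < 1)
    exact sub_pos.mpr hr

theorem QS_variance_diverges_off_variability_weight_general (p : ℕ)
    (s : Fin p → ℝ) (hs : ∀ i, 0 < s i) (w : Fin p → ℝ)
    (hw1 : (∑ i, |w i|) = 1)
    (hne : w ≠ fun i => s i / ∑ j, s j)
    (hne' : w ≠ fun i => -(s i / ∑ j, s j)) :
    Tendsto (fun r : ℝ => QSform p r s w) (𝓝[Set.Ioo (0 : ℝ) 1] 1) atTop := by
  set v : Fin p → ℝ := fun i => w i / s i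
  obtain ⟨i, j, hij⟩ : ∃ i j, v i ≠ v j :=
    exists_div_ne_div_of_ne_variabilityWeight hs hw1 hne hne'
  have hp : (0 : ℝ) < p := by exact_mod_cast i.pos
  have hnum : Tendsto (fun r : ℝ => ∑ i, v i ^ 2 - r / (1 + (p - 1) * r) * (∑ i, v i) ^ 2)
      (𝓝[Set.Ioo 0 1] 1) (𝓝 (∑ i, v i ^ 2 - (∑ i, v i) ^ 2 / p)) := by
    have hd : (1 : ℝ) + (p - 1) * 1 ≠ 0 := by rw [mul_one, add_sub_cancel]; exact hp.ne'
    have hc : Tendsto (fun r : ℝ => r / (1 + (p - 1) * r)) (𝓝 1) (𝓝 (1 / p)) := by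
      simpa [Pi.div_def] using (tendsto_id (x := 𝓝 (1 : ℝ))).div
        (tendsto_const_nhds.add (tendsto_const_nhds.mul tendsto_id)) hd
    simpa [div_eq_inv_mul] using ((hc.mul_const _).const_sub _).mono_left nhdsWithin_le_nhds
  have hpos : 0 < ∑ i, v i ^ 2 - (∑ i, v i) ^ 2 / p := by
    have hCS := sq_sum_lt_card_mul_sum_sq ⟨i, j, hij⟩
    rw [Fintype.card_fin] at hCS
    rw [sub_pos, div_lt_iff₀ hp]
    linarith
  refine (hnum.pos_mul_atTop hpos (tendsto_inv_one_sub_nhdsLT_one.mono_left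
    (nhdsWithin_mono _ Set.Ioo_subset_Iio_self))).congr' ?_
  filter_upwards [self_mem_nhdsWithin] with r ⟨hr0, hr1⟩
  have hd : 1 + (p - 1) * r ≠ 0 := by nlinarith [mul_nonneg p.cast_nonneg hr0.le]
  rw [QSform, dotProduct_unifMat_inv_mulVec hr1.ne hd]
  exact (div_eq_mul_inv _ _).symm

/-- for any fixed weight vector `w` with `Σᵢ |wᵢ| = 1` that is not
`±w_w` (the variability weight vector `w_w = s/Σᵢ sᵢ`), the variance `Q_S(w,r)`
tends to `+∞` as `r → 1⁻` (with `r` ranging in `(0,1)`); only the variability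
weighted group effect (up to sign) stays bounded. -/
theorem QS_variance_diverges_off_variability_weight (p : ℕ) (hp : 2 ≤ p)
    (s : Fin p → ℝ) (hs : ∀ i, 0 < s i) (w : Fin p → ℝ)
    (hw1 : (∑ i, |w i|) = 1)
    (hne : w ≠ fun i => s i / ∑ j, s j)
    (hne' : w ≠ fun i => -(s i / ∑ j, s j)) :
    Tendsto (fun r : ℝ => QSform p r s w) (𝓝[Set.Ioo (0 : ℝ) 1] 1) atTop :=
  QS_variance_diverges_off_variability_weight_general p s hs w hw1 hne hne'
end
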